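/- For the random walk on the network (G, c) and every vertex v, the following identity holds in the extended nonnegative reals: Σ_u c(u) · q_last(u, v) = c(v) · q_0(v) · Σ_{n≥0} p_{2n}(v, v), where the sum on the left is over all vertices u. -/

import Mathlib

open MeasureTheory
open scoped ENNReal NNReal Classical

namespace CollisionsStmt

variable {V : Type*}

/-- The total conductance `c(u) = Σ_v c(u,v)` at a vertex `u` of the network. -/
noncomputable def cWeight (c : V → V → ℝ≥0) (u : V) : ℝ≥0∞ := ∑' v, (c u v : ℝ≥0∞)

/-- One-step transition probabilities of the random walk on the network `(G, c)`:
`p(u,v) = c(u,v)/c(u)`. -/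
noncomputable def netStep (c : V → V → ℝ≥0) (u v : V) : ℝ≥0∞ :=
  (c u v : ℝ≥0∞) / cWeight c u

/-- The `n`-step transition probabilities of the random walk on the network `(G, c)`. -/
noncomputable def netPn (c : V → V → ℝ≥0) : ℕ → V → V → ℝ≥0∞
  | 0, u, v => if u = v then 1 else 0
  | n + 1, u, v => ∑' w, netStep c u w * netPn c n w v

/-- The graph underlying the network: an edge between `u` and `v` whenever `c(u,v) > 0`. -/
def netGraph (c : V → V → ℝ≥0) : SimpleGraph V :=
  SimpleGraph.fromRel (fun u v => c u v ≠ 0)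

/-- `μ` is the law (on path space, via the Ionescu–Tulcea trajectory construction) of
two independent walks with one-step transition probabilities `p`, started at `a` and `b`
respectively; equivalently, the Markov chain on `V × V` with kernel `p ⊗ p` started at `(a, b)`.
The law is characterized by being a probability measure with the prescribed
finite-dimensional (cylinder) distributions. -/
def IsPairWalkMeasure [MeasurableSpace V] (p : V → V → ℝ≥0∞) (a b : V)
    (μ : Measure (ℕ → V × V)) : Prop :=
  IsProbabilityMeasure μ ∧
    ∀ (n : ℕ) (x : ℕ → V × V),
      μ {ω | ∀ i ≤ n, ω i = x i} =
        (if x 0 = (a, b) then (1 : ℝ≥0∞) else 0) *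
          ∏ i ∈ Finset.range n, (p (x i).1 (x (i + 1)).1 * p (x i).2 (x (i + 1)).2)

/-- The event that the two walks do not collide at any time `n ≥ 1`. -/
def noCollision : Set (ℕ → V × V) := {ω | ∀ n ≥ 1, (ω n).1 ≠ (ω n).2}

/-- The event that the two walks have their last collision at the vertex `v`: for some
`n ≥ 0`, `X_n = Y_n = v` and `X_m ≠ Y_m` for all `m > n`. -/
def lastCollisionAt (v : V) : Set (ℕ → V × V) :=
  {ω | ∃ n : ℕ, ω n = (v, v) ∧ ∀ m > n, (ω m).1 ≠ (ω m).2}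

/-- The event that the two walks collide at only finitely many times. -/
def finCollisions : Set (ℕ → V × V) := {ω | {n : ℕ | (ω n).1 = (ω n).2}.Finite}

/-- The event that the two walks collide at infinitely many times. -/
def infCollisions : Set (ℕ → V × V) := {ω | {n : ℕ | (ω n).1 = (ω n).2}.Infinite}

/-!
Split the event that the last collision happens at `v` according to its time `n`. By the Markov
property at time `n`, the walks from `u` meet at `v` at time `n` and never again afterwards with
probability `p_n(u,v)² q₀(v)`. Reversibility `c(u) p_n(u,v) = c(v) p_n(v,u)` and
Chapman–Kolmogorov give `Σ_u c(u) p_n(u,v)² = c(v) p_{2n}(v,v)`; sum over `n`.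
-/

section StepPow

variable {S : Type*} (P : S → S → ℝ≥0∞)

noncomputable def stepPow : ℕ → S → S → ℝ≥0∞
  | 0, r, s => if r = s then 1 else 0
  | n + 1, r, s => ∑' w, P r w * stepPow n w s

lemma stepPow_zero (r s : S) : stepPow P 0 r s = if r = s then 1 else 0 := rfl

lemma stepPow_succ (n : ℕ) (r s : S) :
    stepPow P (n + 1) r s = ∑' w, P r w * stepPow P n w s := rfl

lemma stepPow_add (m n : ℕ) (r s : S) :
    stepPow P (m + n) r s = ∑' w, stepPow P m r w * stepPow P n w s := by
  induction m generalizing r with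
  | zero => simp [stepPow_zero, ite_mul]
  | succ m ih =>
    simp_rw [Nat.add_right_comm m 1 n, stepPow_succ, ih, ← ENNReal.tsum_mul_left,
      ← ENNReal.tsum_mul_right, mul_assoc]
    exact ENNReal.tsum_comm

lemma stepPow_succ' (n : ℕ) (r s : S) :
    stepPow P (n + 1) r s = ∑' w, stepPow P n r w * P w s := by
  simp [stepPow_add P n 1, stepPow_succ, stepPow_zero]

lemma stepPow_le_one (hP : ∀ r, ∑' w, P r w = 1) (n : ℕ) (r s : S) : stepPow P n r s ≤ 1 := by
  induction n generalizing r with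
  | zero => rw [stepPow_zero]; split_ifs <;> simp
  | succ n ih =>
    calc stepPow P (n + 1) r s ≤ ∑' w, P r w * 1 := by
          rw [stepPow_succ]; gcongr with w; exact ih w
      _ = 1 := by simp [hP]

variable {P} {π : S → ℝ≥0∞}

lemma stepPow_detailed_balance (hπ : ∀ r w, π r * P r w = π w * P w r) (n : ℕ) (r s : S) :
    π r * stepPow P n r s = π s * stepPow P n s r := by
  induction n generalizing r with
  | zero => rw [stepPow_zero, stepPow_zero]; split_ifs with h h' h' <;> simp_all
  | succ n ih =>
    calc π r * stepPow P (n + 1) r s = ∑' w, P w r * (π w * stepPow P n w s) := by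
          rw [stepPow_succ, ← ENNReal.tsum_mul_left]
          congr 1 with w
          rw [← mul_assoc, hπ, mul_comm (π w), mul_assoc]
      _ = π s * stepPow P (n + 1) s r := by
          simp_rw [ih, stepPow_succ', ← ENNReal.tsum_mul_left]
          congr 1 with w
          ring

lemma tsum_mul_stepPow_sq (hπ : ∀ r w, π r * P r w = π w * P w r) (n : ℕ) (s : S) :
    ∑' r, π r * stepPow P n r s ^ 2 = π s * stepPow P (2 * n) s s := by
  simp_rw [sq, ← mul_assoc, stepPow_detailed_balance hπ, mul_assoc, ENNReal.tsum_mul_left,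
    two_mul, stepPow_add]

end StepPow

noncomputable def pairKernel (p : V → V → ℝ≥0∞) (r w : V × V) : ℝ≥0∞ := p r.1 w.1 * p r.2 w.2

lemma stepPow_pairKernel (p : V → V → ℝ≥0∞) (n : ℕ) (a b c d : V) :
    stepPow (pairKernel p) n (a, b) (c, d) = stepPow p n a c * stepPow p n b d := by
  induction n generalizing a b with
  | zero => simp only [stepPow_zero, Prod.mk.injEq]; split_ifs <;> simp_all
  | succ n ih =>
    simp_rw [stepPow_succ, ENNReal.tsum_prod', pairKernel, ih, ← ENNReal.tsum_mul_right]
    congr 1 with w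
    rw [← ENNReal.tsum_mul_left]
    congr 1 with w'
    ring

section PathSum

variable {S : Type*} (P : S → S → ℝ≥0∞)

def pathCons (r : S) (ω : ℕ → S) : ℕ → S
  | 0 => r
  | i + 1 => ω i

@[simp]
lemma pathCons_succ (r : S) (ω : ℕ → S) (i : ℕ) : pathCons r ω (i + 1) = ω i := rfl

def stoppedPath (N : ℕ) (y : Fin (N + 1) → S) : ℕ → S := fun i => y ⟨min i N, by omega⟩

lemma stoppedPath_of_le {N i : ℕ} (y : Fin (N + 1) → S) (h : i ≤ N) :
    stoppedPath N y i = y ⟨i, by omega⟩ := by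
  simp [stoppedPath, Nat.min_eq_left h]

@[simp]
lemma stoppedPath_zero (N : ℕ) (y : Fin (N + 1) → S) : stoppedPath N y 0 = y 0 := rfl

lemma stoppedPath_cons (N : ℕ) (r : S) (y : Fin (N + 1) → S) :
    stoppedPath (N + 1) (Fin.cons r y) = pathCons r (stoppedPath N y) := by
  funext i
  cases i with
  | zero => rfl
  | succ i =>
    have hi : (⟨min (i + 1) (N + 1), by omega⟩ : Fin (N + 2)) = Fin.succ ⟨min i N, by omega⟩ :=
      Fin.ext (Nat.succ_min_succ i N)
    simp only [stoppedPath, pathCons, hi, Fin.cons_succ]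

noncomputable def pathWeight (N : ℕ) (ω : ℕ → S) : ℝ≥0∞ :=
  ∏ i ∈ Finset.range N, P (ω i) (ω (i + 1))

lemma pathWeight_cons (N : ℕ) (r : S) (ω : ℕ → S) :
    pathWeight P (N + 1) (pathCons r ω) = P r (ω 0) * pathWeight P N ω := by
  simp [pathWeight, Finset.prod_range_succ', pathCons, mul_comm]

/-- The expectation of `f` under the chain with kernel `P` started at `r`, provided `f` depends
only on the first `N + 1` coordinates. -/
noncomputable def pathSum (N : ℕ) (f : (ℕ → S) → ℝ≥0∞) (r : S) : ℝ≥0∞ :=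
  ∑' y : Fin (N + 1) → S,
    (if y 0 = r then 1 else 0) * pathWeight P N (stoppedPath N y) * f (stoppedPath N y)

lemma pathSum_succ (N : ℕ) (f : (ℕ → S) → ℝ≥0∞) (r : S) :
    pathSum P (N + 1) f r = ∑' w, P r w * pathSum P N (fun ω => f (pathCons r ω)) w := by
  rw [pathSum, ← (Fin.consEquiv fun _ => S).tsum_eq, ENNReal.tsum_prod']
  simp only [Fin.consEquiv, Equiv.coe_fn_mk, Fin.cons_zero, stoppedPath_cons, pathWeight_cons]
  rw [tsum_eq_single r fun q hq => by simp [hq]]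
  simp_rw [pathSum, ← ENNReal.tsum_mul_left]
  rw [ENNReal.tsum_comm]
  congr 1 with y
  rw [tsum_eq_single (y 0) fun w hw => by simp [Ne.symm hw]]
  simp only [stoppedPath_zero, if_true, one_mul, mul_assoc]

lemma pathSum_mul_start (N : ℕ) (φ : S → ℝ≥0∞) (f : (ℕ → S) → ℝ≥0∞) (r : S) :
    pathSum P N (fun ω => φ (ω 0) * f ω) r = φ r * pathSum P N f r := by
  rw [pathSum, pathSum, ← ENNReal.tsum_mul_left]
  congr 1 with y
  split_ifs with h
  · rw [stoppedPath_zero, h]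
    ring
  · simp

lemma pathSum_markov [DecidableEq S] (n k : ℕ) (s : S) (g : (ℕ → S) → ℝ≥0∞) (r : S) :
    pathSum P (k + n) (fun ω => (if ω n = s then 1 else 0) * g fun i => ω (n + i)) r
      = stepPow P n r s * pathSum P k g s := by
  induction n generalizing r with
  | zero =>
    simp only [Nat.add_zero, Nat.zero_add, pathSum_mul_start (φ := fun q => if q = s then 1 else 0),
      stepPow_zero]
    split_ifs with h <;> simp [h]
  | succ n ih =>
    rw [Nat.add_succ, pathSum_succ, stepPow_succ]
    have hcons : ∀ ω : ℕ → S, ∀ i, pathCons r ω (n + 1 + i) = ω (n + i) := fun ω i => by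
      rw [Nat.add_right_comm]; rfl
    simp only [hcons, pathCons_succ]
    rw [← ENNReal.tsum_mul_right]
    congr 1 with w
    rw [mul_assoc, ← ih w]
    rfl

end PathSum

section PathMeasure

variable {S : Type*} [MeasurableSpace S] [MeasurableSingletonClass S] [Countable S]

lemma measure_eq_pathSum {P : S → S → ℝ≥0∞} {r : S} {μ : Measure (ℕ → S)}
    (hμ : ∀ N (x : ℕ → S), μ {ω | ∀ i ≤ N, ω i = x i} =
      (if x 0 = r then 1 else 0) * pathWeight P N x)
    (N : ℕ) {A : Set (ℕ → S)} (hA : ∀ ω ω', Set.EqOn ω ω' (Set.Iic N) → ω ∈ A → ω' ∈ A) :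
    μ A = pathSum P N (A.indicator 1) r := by
  let restrict : (ℕ → S) → (Fin (N + 1) → S) := fun ω i => ω i
  have hrestrict : Measurable restrict := measurable_pi_lambda _ fun i => measurable_pi_apply _
  have hstopped : ∀ ω, ∀ i ≤ N, ω i = stoppedPath N (restrict ω) i := fun ω i hi => by
    rw [stoppedPath_of_le _ hi]
  have hpre : A = restrict ⁻¹' {y | stoppedPath N y ∈ A} :=
    Set.ext fun ω => ⟨hA _ _ (hstopped ω), hA _ _ fun i hi => (hstopped ω i hi).symm⟩
  have hcyl : ∀ y, restrict ⁻¹' {y} = {ω | ∀ i ≤ N, ω i = stoppedPath N y i} := fun y => by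
    ext ω
    simp only [Set.mem_preimage, Set.mem_singleton_iff, Set.mem_ofPred_eq, funext_iff, restrict]
    exact ⟨fun h i hi => by rw [stoppedPath_of_le _ hi, ← h],
      fun h i => by rw [h i (by omega), stoppedPath_of_le _ (by omega)]⟩
  rw [congrArg μ hpre, ← Measure.map_apply hrestrict (Set.to_countable _).measurableSet,
    ← Measure.tsum_indicator_apply_singleton _ _ (Set.to_countable _).measurableSet, pathSum]
  congr 1 with y
  by_cases hy : stoppedPath N y ∈ A
  · rw [Set.indicator_of_mem hy, Set.indicator_of_mem (s := {y | stoppedPath N y ∈ A}) hy,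
      Measure.map_apply hrestrict (measurableSet_singleton y), hcyl, hμ, stoppedPath_zero,
      Pi.one_apply, mul_one]
  · simp [hy]

end PathMeasure

section Collisions

open Set

def collisionFreeOn (s : Set ℕ) : Set (ℕ → V × V) := {ω | ∀ m ∈ s, (ω m).1 ≠ (ω m).2}

lemma collisionFreeOn_anti : Antitone (collisionFreeOn (V := V)) :=
  fun _ _ hst _ hω m hm => hω m (hst hm)

lemma mem_collisionFreeOn_of_eqOn {s : Set ℕ} {ω ω' : ℕ → V × V} (h : EqOn ω ω' s)
    (hω : ω ∈ collisionFreeOn s) : ω' ∈ collisionFreeOn s :=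
  fun m hm => h hm ▸ hω m hm

lemma measurableSet_collisionFreeOn [MeasurableSpace V] [MeasurableSingletonClass V]
    [Countable V] (s : Set ℕ) : MeasurableSet (collisionFreeOn (V := V) s) := by
  have : collisionFreeOn (V := V) s = ⋂ m ∈ s, (fun ω => ω m) ⁻¹' {q | q.1 ≠ q.2} := by
    ext ω
    simp [collisionFreeOn]
  rw [this]
  exact .biInter s.to_countable fun m _ => measurable_pi_apply m (to_countable _).measurableSet

lemma shift_mem_collisionFreeOn_Ioc (ω : ℕ → V × V) (n k : ℕ) :
    (fun i => ω (n + i)) ∈ collisionFreeOn (Ioc 0 k) ↔ ω ∈ collisionFreeOn (Ioc n (n + k)) := by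
  refine ⟨fun h m hm => ?_, fun h i hi => h (n + i) ?_⟩
  · obtain ⟨i, rfl⟩ := Nat.exists_eq_add_of_le hm.1.le
    exact h i ⟨by simpa using hm.1, by simpa using hm.2⟩
  · exact ⟨by simpa using hi.1, by simpa using hi.2⟩

lemma collisionFreeOn_Ioi (n : ℕ) :
    collisionFreeOn (V := V) (Ioi n) = ⋂ k, collisionFreeOn (Ioc n (n + k)) := by
  ext ω
  simp only [collisionFreeOn, mem_iInter, mem_ofPred_eq]
  exact ⟨fun h k m hm => h m hm.1, fun h m hm => h (m - n) m ⟨hm, by omega⟩⟩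

lemma noCollision_eq_collisionFreeOn : noCollision (V := V) = collisionFreeOn (Ioi 0) := by
  ext ω
  simp [noCollision, collisionFreeOn, Nat.one_le_iff_ne_zero, Nat.pos_iff_ne_zero]

lemma lastCollisionAt_eq_iUnion (v : V) :
    lastCollisionAt v = ⋃ n, {ω | ω n = (v, v)} ∩ collisionFreeOn (Ioi n) := by
  ext ω
  simp [lastCollisionAt, collisionFreeOn]

end Collisions

section PairWalk

open Set Function

variable [MeasurableSpace V] [MeasurableSingletonClass V] [Countable V]
  {p : V → V → ℝ≥0∞} {a b v : V} {μ ν : Measure (ℕ → V × V)}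

lemma IsPairWalkMeasure.measure_eq_pathSum (hμ : IsPairWalkMeasure p a b μ) (N : ℕ)
    {A : Set (ℕ → V × V)} (hA : ∀ ω ω', EqOn ω ω' (Iic N) → ω ∈ A → ω' ∈ A) :
    μ A = pathSum (pairKernel p) N (A.indicator 1) (a, b) :=
  CollisionsStmt.measure_eq_pathSum (fun N x => by rw [hμ.2]; congr) N hA

lemma measure_diag_inter_collisionFreeOn_Ioc (hμ : IsPairWalkMeasure p a b μ)
    (hν : IsPairWalkMeasure p v v ν) (n k : ℕ) :
    μ ({ω | ω n = (v, v)} ∩ collisionFreeOn (Ioc n (n + k)))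
      = stepPow p n a v * stepPow p n b v * ν (collisionFreeOn (Ioc 0 k)) := by
  have hindicator : ({ω | ω n = (v, v)} ∩ collisionFreeOn (Ioc n (n + k))).indicator 1
      = fun ω => (if ω n = (v, v) then 1 else 0 : ℝ≥0∞) *
          (collisionFreeOn (Ioc 0 k)).indicator 1 fun i => ω (n + i) := by
    ext ω
    simp only [indicator_apply, mem_inter_iff, mem_ofPred_eq, shift_mem_collisionFreeOn_Ioc]
    split_ifs <;> simp_all
  rw [hμ.measure_eq_pathSum (k + n), hindicator, pathSum_markov, stepPow_pairKernel,
    hν.measure_eq_pathSum k]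
  · exact fun ω ω' h hω => mem_collisionFreeOn_of_eqOn (h.mono Ioc_subset_Iic_self) hω
  · rintro ω ω' h ⟨hn, hω⟩
    exact ⟨(h (show n ≤ k + n by omega)).symm.trans hn,
      mem_collisionFreeOn_of_eqOn (h.mono fun m hm => by simp at hm ⊢; omega) hω⟩

lemma measurableSet_diag_inter_collisionFreeOn (n : ℕ) (s : Set ℕ) :
    MeasurableSet ({ω | ω n = (v, v)} ∩ collisionFreeOn s) :=
  (measurable_pi_apply n (measurableSet_singleton _)).inter (measurableSet_collisionFreeOn s)

lemma measure_diag_inter_collisionFreeOn_Ioi (hp : ∀ r, ∑' w, p r w = 1)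
    (hμ : IsPairWalkMeasure p a b μ) (hν : IsPairWalkMeasure p v v ν) (n : ℕ) :
    μ ({ω | ω n = (v, v)} ∩ collisionFreeOn (Ioi n))
      = stepPow p n a v * stepPow p n b v * ν noCollision := by
  have := hμ.1
  have := hν.1
  have hanti : ∀ n, Antitone fun k => collisionFreeOn (V := V) (Ioc n (n + k)) := fun n =>
    collisionFreeOn_anti.comp_monotone fun k k' hk => Ioc_subset_Ioc_right (by omega)
  have hfactor : stepPow p n a v * stepPow p n b v ≠ ∞ :=
    (ENNReal.mul_lt_top (stepPow_le_one p hp n a v |>.trans_lt ENNReal.one_lt_top)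
      (stepPow_le_one p hp n b v |>.trans_lt ENNReal.one_lt_top)).ne
  rw [collisionFreeOn_Ioi, inter_iInter, noCollision_eq_collisionFreeOn, collisionFreeOn_Ioi,
    Antitone.measure_iInter (fun k k' hk => inter_subset_inter_right _ (hanti n hk))
      (fun k => (measurableSet_diag_inter_collisionFreeOn n _).nullMeasurableSet)
      ⟨0, measure_ne_top _ _⟩,
    Antitone.measure_iInter (hanti 0) (fun k => (measurableSet_collisionFreeOn _).nullMeasurableSet)
      ⟨0, measure_ne_top _ _⟩, ENNReal.mul_iInf fun h => absurd h hfactor]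
  simp_rw [measure_diag_inter_collisionFreeOn_Ioc hμ hν, zero_add]

lemma measure_lastCollisionAt (hp : ∀ r, ∑' w, p r w = 1)
    (hμ : IsPairWalkMeasure p a b μ) (hν : IsPairWalkMeasure p v v ν) :
    μ (lastCollisionAt v) = ∑' n, stepPow p n a v * stepPow p n b v * ν noCollision := by
  have hdisjoint : Pairwise (Disjoint on fun n => {ω | ω n = (v, v)} ∩ collisionFreeOn (Ioi n)) :=
    (pairwise_disjoint_on _).2 fun m n hmn => disjoint_left.2 fun ω ⟨_, hω⟩ ⟨hn, _⟩ =>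
      hω n hmn (by rw [hn])
  rw [lastCollisionAt_eq_iUnion,
    measure_iUnion hdisjoint fun n => measurableSet_diag_inter_collisionFreeOn n _]
  simp_rw [measure_diag_inter_collisionFreeOn_Ioi hp hμ hν]

end PairWalk

section Network

variable {c : V → V → ℝ≥0}

lemma cWeight_ne_top (hloc : ∀ u, {v | c u v ≠ 0}.Finite) (u : V) : cWeight c u ≠ ∞ := by
  rw [cWeight, tsum_eq_sum (s := (hloc u).toFinset) fun v hv => by simpa using hv]
  exact ENNReal.sum_ne_top.2 fun _ _ => ENNReal.coe_ne_top

lemma cWeight_mul_netStep (hloc : ∀ u, {v | c u v ≠ 0}.Finite) (hpos : ∀ u, 0 < cWeight c u)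
    (u w : V) : cWeight c u * netStep c u w = c u w :=
  ENNReal.mul_div_cancel (hpos u).ne' (cWeight_ne_top hloc u)

lemma tsum_netStep (hloc : ∀ u, {v | c u v ≠ 0}.Finite) (hpos : ∀ u, 0 < cWeight c u) (u : V) :
    ∑' w, netStep c u w = 1 := by
  simp_rw [netStep, div_eq_mul_inv, ENNReal.tsum_mul_right]
  exact ENNReal.mul_inv_cancel (hpos u).ne' (cWeight_ne_top hloc u)

lemma cWeight_mul_netStep_comm (hsymm : ∀ u v, c u v = c v u)
    (hloc : ∀ u, {v | c u v ≠ 0}.Finite) (hpos : ∀ u, 0 < cWeight c u) (u w : V) :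
    cWeight c u * netStep c u w = cWeight c w * netStep c w u := by
  rw [cWeight_mul_netStep hloc hpos, cWeight_mul_netStep hloc hpos, hsymm]

lemma netPn_eq_stepPow (c : V → V → ℝ≥0) : netPn c = stepPow (netStep c) := by
  ext n u v
  induction n generalizing u with
  | zero => rfl
  | succ n ih => simp only [netPn, stepPow_succ, ih]

end Network

theorem network_mass_transport_identity_general
    [Countable V] [MeasurableSpace V] [DiscreteMeasurableSpace V]
    (c : V → V → ℝ≥0)
    (hsymm : ∀ u v : V, c u v = c v u)
    (hloc : ∀ u : V, {v : V | c u v ≠ 0}.Finite)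
    (hpos : ∀ u : V, 0 < cWeight c u)
    (μ : V → Measure (ℕ → V × V))
    (hμ : ∀ w : V, IsPairWalkMeasure (netStep c) w w (μ w))
    (v : V) :
    ∑' u : V, cWeight c u * μ u (lastCollisionAt v)
      = cWeight c v * μ v noCollision * ∑' n : ℕ, netPn c (2 * n) v v := by
  have hlast : ∀ u, μ u (lastCollisionAt v)
      = ∑' n, stepPow (netStep c) n u v ^ 2 * μ v noCollision := fun u => by
    simpa only [sq] using measure_lastCollisionAt (tsum_netStep hloc hpos) (hμ u) (hμ v)
  calc ∑' u, cWeight c u * μ u (lastCollisionAt v)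
      = ∑' n, (∑' u, cWeight c u * stepPow (netStep c) n u v ^ 2) * μ v noCollision := by
        simp_rw [hlast, ← ENNReal.tsum_mul_left, ← ENNReal.tsum_mul_right, mul_assoc]
        exact ENNReal.tsum_comm
    _ = cWeight c v * μ v noCollision * ∑' n, netPn c (2 * n) v v := by
        simp_rw [tsum_mul_stepPow_sq (cWeight_mul_netStep_comm hsymm hloc hpos), netPn_eq_stepPow,
          ← ENNReal.tsum_mul_left]
        congr 1 with n
        ring

/-- for the network random walk,
`Σ_u c(u) · q_last(u, v) = c(v) · q_0(v) · Σ_{n ≥ 0} p_{2n}(v, v)`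
in the extended nonnegative reals. -/
theorem network_mass_transport_identity
    [Countable V] [MeasurableSpace V] [DiscreteMeasurableSpace V]
    (c : V → V → ℝ≥0)
    (hsymm : ∀ u v : V, c u v = c v u)
    (hloc : ∀ u : V, {v : V | c u v ≠ 0}.Finite)
    (hconn : (netGraph c).Connected)
    (hpos : ∀ u : V, 0 < cWeight c u)
    (μ : V → Measure (ℕ → V × V))
    (hμ : ∀ w : V, IsPairWalkMeasure (netStep c) w w (μ w))
    (v : V) :
    ∑' u : V, cWeight c u * μ u (lastCollisionAt v)
      = cWeight c v * μ v noCollision * ∑' n : ℕ, netPn c (2 * n) v v :=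
  network_mass_transport_identity_general c hsymm hloc hpos μ hμ v

end CollisionsStmt
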